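/- Let c₂, c₃, f₀ be positive real numbers with c₃·f₀ ≥ 1, let T be a real number with 0 < T ≤ 1/(24·c₂·c₃²·f₀⁴), and let F : [0, T] → ℝ be a continuous function with F(0) ≤ f₀ and such that for every t ∈ [0, T], F(t) ≤ c₃·f₀² + c₂·t·(sup_{u ∈ [0,t]} F(u))³. Then sup_{t ∈ [0,T]} F(t) ≤ 2·c₃·f₀². -/
import Mathlib


/-- Abstract barrier argument: if `c₃·f₀ ≥ 1`, `0 < T ≤ 1/(24·c₂·c₃²·f₀⁴)`, and
`F : [0, T] → ℝ` is continuous with `F(0) ≤ f₀` and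
`F(t) ≤ c₃·f₀² + c₂·t·(sup_{[0,t]} F)³` for all `t ∈ [0, T]`, then
`sup_{[0,T]} F ≤ 2·c₃·f₀²`. -/
theorem stmt_14 (c₂ c₃ f₀ T : ℝ) (hc₂ : 0 < c₂) (hc₃ : 0 < c₃) (hf₀ : 0 < f₀)
    (h1 : 1 ≤ c₃ * f₀) (hT0 : 0 < T) (hT : T ≤ 1 / (24 * c₂ * c₃ ^ 2 * f₀ ^ 4))
    (F : ℝ → ℝ) (hFcont : ContinuousOn F (Set.Icc 0 T)) (hF0 : F 0 ≤ f₀)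
    (hFle : ∀ t ∈ Set.Icc (0 : ℝ) T,
      F t ≤ c₃ * f₀ ^ 2 + c₂ * t * (sSup (F '' Set.Icc (0 : ℝ) t)) ^ 3) :
    sSup (F '' Set.Icc (0 : ℝ) T) ≤ 2 * c₃ * f₀ ^ 2 := by
  set M : ℝ := 2 * c₃ * f₀ ^ 2 with hM
  have hMpos : 0 < M := by positivity
  have hf₀M : f₀ < M := by nlinarith
  -- key claim: F t ≤ M on [0,T]
  have key : ∀ t ∈ Set.Icc (0 : ℝ) T, F t ≤ M := by
    by_contra hcon
    push_neg at hcon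
    obtain ⟨t₁, ht₁, ht₁M⟩ := hcon
    -- the set where F ≥ M
    set C : Set ℝ := Set.Icc 0 T ∩ F ⁻¹' Set.Ici M with hC
    have hCne : C.Nonempty := ⟨t₁, ht₁, le_of_lt ht₁M⟩
    have hCclosed : IsClosed C :=
      hFcont.preimage_isClosed_of_isClosed isClosed_Icc isClosed_Ici
    have hCbdd : BddBelow C := ⟨0, fun x hx => hx.1.1⟩
    set t₀ : ℝ := sInf C with ht₀def
    have ht₀C : t₀ ∈ C := hCclosed.csInf_mem hCne hCbdd
    have ht₀T : t₀ ∈ Set.Icc (0 : ℝ) T := ht₀C.1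
    have ht₀F : M ≤ F t₀ := ht₀C.2
    have ht₀pos : 0 < t₀ := by
      rcases lt_or_eq_of_le ht₀T.1 with h | h
      · exact h
      · exfalso
        have : M ≤ F 0 := by rw [← h] at ht₀F; exact ht₀F
        linarith
    -- below t₀, F < M
    have hbelow : ∀ s, 0 ≤ s → s < t₀ → F s ≤ M := by
      intro s hs0 hst
      by_contra hs
      push_neg at hs
      have hsC : s ∈ C := ⟨⟨hs0, le_trans (le_of_lt hst) ht₀T.2⟩, le_of_lt hs⟩
      exact absurd (csInf_le hCbdd hsC) (not_le.mpr hst)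
    -- F t₀ ≤ M by left continuity
    have ht₀leM : F t₀ ≤ M := by
      have hsub : Set.Ioo 0 t₀ ⊆ Set.Icc 0 T := fun x hx =>
        ⟨le_of_lt hx.1, le_trans (le_of_lt hx.2) ht₀T.2⟩
      have hclos : t₀ ∈ closure (Set.Ioo 0 t₀) := by
        rw [closure_Ioo (ne_of_lt ht₀pos)]
        exact ⟨le_of_lt ht₀pos, le_refl _⟩
      have hne : (nhdsWithin t₀ (Set.Ioo 0 t₀)).NeBot :=
        mem_closure_iff_nhdsWithin_neBot.mp hclos
      have htend : Filter.Tendsto F (nhdsWithin t₀ (Set.Ioo 0 t₀)) (nhds (F t₀)) :=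
        ((hFcont t₀ ht₀T).mono hsub).tendsto
      refine le_of_tendsto htend ?_
      filter_upwards [self_mem_nhdsWithin] with s hs
      exact hbelow s (le_of_lt hs.1) hs.2
    have ht₀eq : F t₀ = M := le_antisymm ht₀leM ht₀F
    -- sup over [0, t₀] equals M
    have hGle : sSup (F '' Set.Icc (0 : ℝ) t₀) ≤ M := by
      apply Real.sSup_le
      · rintro y ⟨s, hs, rfl⟩
        rcases lt_or_eq_of_le hs.2 with h | h
        · exact hbelow s hs.1 h
        · rw [h, ht₀eq]
      · exact le_of_lt hMpos
    have hGge : M ≤ sSup (F '' Set.Icc (0 : ℝ) t₀) := by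
      rw [← ht₀eq]
      have hcomp : IsCompact (F '' Set.Icc (0 : ℝ) t₀) :=
        isCompact_Icc.image_of_continuousOn (hFcont.mono (Set.Icc_subset_Icc_right ht₀T.2))
      exact le_csSup hcomp.bddAbove ⟨t₀, ⟨le_of_lt ht₀pos, le_refl _⟩, rfl⟩
    have hGeq : sSup (F '' Set.Icc (0 : ℝ) t₀) = M := le_antisymm hGle hGge
    have hle := hFle t₀ ht₀T
    rw [hGeq, ht₀eq] at hle
    -- arithmetic contradiction
    have hTmul : 24 * c₂ * c₃ ^ 2 * f₀ ^ 4 * T ≤ 1 := by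
      have hd : 0 < 24 * c₂ * c₃ ^ 2 * f₀ ^ 4 := by positivity
      rw [← le_div_iff₀' hd]
      exact hT
    have ht₀T' : t₀ ≤ T := ht₀T.2
    have : c₂ * t₀ * M ^ 3 ≤ c₃ * f₀ ^ 2 / 3 := by
      have h1 : c₂ * t₀ * M ^ 3 ≤ c₂ * T * M ^ 3 := by
        have : 0 ≤ c₂ * M ^ 3 := by positivity
        nlinarith
      have h2 : c₂ * T * M ^ 3 ≤ c₃ * f₀ ^ 2 / 3 := by
        rw [hM]
        nlinarith [sq_nonneg (c₃ * f₀ ^ 2), hc₃.le, hf₀.le]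
      linarith
    nlinarith
  -- conclude
  apply Real.sSup_le
  · rintro y ⟨s, hs, rfl⟩
    exact key s hs
  · positivity
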